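/- Let ψ ∈ 𝓢(ℝ) and let Φ : 𝕊^{n-1}×ℝ×(0,∞) → ℂ have rapid decay. Then for every x ∈ ℝⁿ, R^t_ψ Φ(x) = (1/(2π)) ∫_{𝕊^{n-1}} ∫₀^∞ ∫_ℝ e^{i ω (u·x)} · Φ̂(u,ω,a) · ψ̂(a ω) · a^{−n} dω da du, where Φ̂(u,ω,a) = ∫_ℝ Φ(u,b,a) e^{−i b ω} db denotes the Fourier transform of Φ in the variable b. -/

import Mathlib

open MeasureTheory Metric Filter Set
open scoped Real ComplexConjugate Manifold

noncomputable section

/-- Euclidean space ℝⁿ. -/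
abbrev En (n : ℕ) := EuclideanSpace ℝ (Fin n)

/-- The unit sphere 𝕊^{n-1} of ℝⁿ, as a subtype. -/
abbrev Sph (n : ℕ) := Metric.sphere (0 : En n) 1

/-- The surface measure on the sphere 𝕊^{n-1}. -/
def sphMeasure (n : ℕ) : Measure (Sph n) := (volume : Measure (En n)).toSphere

/-- 1D Fourier transform ĝ(ω) = ∫ g(x) e^{-i x ω} dx. -/
def FT1 (g : ℝ → ℂ) (ω : ℝ) : ℂ := ∫ x : ℝ, g x * Complex.exp (-(Complex.I * (x * ω : ℝ)))

/-- n-dimensional Fourier transform ĝ(w) = ∫ g(x) e^{-i x·w} dx. -/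
def FTn {n : ℕ} (g : En n → ℂ) (w : En n) : ℂ :=
  ∫ x : En n, g x * Complex.exp (-(Complex.I * (inner ℝ x w : ℝ)))

/-- The ridgelet ψ_{u,b,a}(x) = a⁻¹ ψ((x·u − b)/a). -/
def ridgelet {n : ℕ} (ψ : ℝ → ℂ) (u : Sph n) (b a : ℝ) (x : En n) : ℂ :=
  (a : ℂ)⁻¹ * ψ (((inner ℝ x (u : En n) : ℝ) - b) / a)

/-- The ridgelet transform R_ψ f(u,b,a) = ∫ f(x) conj(ψ_{u,b,a}(x)) dx. -/
def RT {n : ℕ} (ψ : ℝ → ℂ) (f : En n → ℂ) (u : Sph n) (b a : ℝ) : ℂ :=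
  ∫ x : En n, f x * conj (ridgelet ψ u b a x)

/-- K_{ψ,η} = (2π)^{n-1} ∫ conj(ψ̂(ω)) η̂(ω) |ω|^{-n} dω. -/
def Kconst (n : ℕ) (ψ η : ℝ → ℂ) : ℂ :=
  (((2 * π) ^ (n - 1) : ℝ) : ℂ) *
    ∫ ω : ℝ, conj (FT1 ψ ω) * FT1 η ω * ((|ω| ^ n : ℝ) : ℂ)⁻¹

/-- All moments vanish (Lizorkin condition on ℝ). -/
def Lizorkin1 (ψ : ℝ → ℂ) : Prop := ∀ m : ℕ, ∫ x : ℝ, (x : ℂ) ^ m * ψ x = 0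

/-- All moments vanish (Lizorkin condition on ℝⁿ). -/
def LizorkinN {n : ℕ} (φ : En n → ℂ) : Prop :=
  ∀ m : Fin n → ℕ, ∫ x : En n, (∏ i, (x i : ℂ) ^ m i) * φ x = 0

/-- The Radon transform Rf(u,p) = ∫_{u^⊥} f(pu + y) dy. -/
def Radon {n : ℕ} (f : En n → ℂ) (u : Sph n) (p : ℝ) : ℂ :=
  ∫ y : ((ℝ ∙ (u : En n))ᗮ : Submodule ℝ (En n)), f (p • (u : En n) + y)

/-- The 1D wavelet transform W_ψ g(b,a) = ∫ g(p) a⁻¹ conj(ψ((p−b)/a)) dp. -/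
def WT (ψ : ℝ → ℂ) (g : ℝ → ℂ) (b a : ℝ) : ℂ :=
  ∫ p : ℝ, g p * ((a : ℂ)⁻¹ * conj (ψ ((p - b) / a)))

/-- Rapid decay of a function Φ on 𝕊^{n-1}×ℝ×(0,∞) (arguments ordered (u,b,a)). -/
structure RapidDecay {n : ℕ} (Φ : Sph n → ℝ → ℝ → ℂ) : Prop where
  cont : ContinuousOn (fun q : Sph n × ℝ × ℝ => Φ q.1 q.2.1 q.2.2)
    (univ ×ˢ univ ×ˢ Ioi (0 : ℝ))
  decay : ∀ s r : ℕ, ∃ C : ℝ, ∀ (u : Sph n) (b : ℝ) (a : ℝ), 0 < a →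
    (a ^ s + (a ^ s)⁻¹) * (1 + b ^ 2) ^ ((r : ℝ) / 2) * ‖Φ u b a‖ ≤ C

/-- The ridgelet synthesis operator
R^t_ψ Φ(x) = ∫_{𝕊^{n-1}} ∫₀^∞ ∫_ℝ Φ(u,b,a) ψ_{u,b,a}(x) a^{−n} db da du. -/
def RTsynth {n : ℕ} (ψ : ℝ → ℂ) (Φ : Sph n → ℝ → ℝ → ℂ) (x : En n) : ℂ :=
  ∫ u : Sph n, (∫ a in Ioi (0:ℝ), (∫ b : ℝ, Φ u b a * ridgelet ψ u b a x * ((a ^ n : ℝ) : ℂ)⁻¹))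
    ∂(sphMeasure n)

/-- The seminorm ρ_ν(φ) = sup_{x, m ≤ ν} (1+|x|)^ν ‖∂^m φ(x)‖. -/
def rho {E : Type*} [NormedAddCommGroup E] [NormedSpace ℝ E] (ν : ℕ) (φ : E → ℂ) : ℝ :=
  ⨆ q : E × Fin (ν + 1), (1 + ‖q.1‖) ^ ν * ‖iteratedFDeriv ℝ q.2.1 φ q.1‖

/-
For fixed `u` and `a`, the `b`-integral in `R^t_ψ Φ(x)` is the convolution of `Φ(u, ·, a)` with
the dilate `a⁻¹ ψ(· / a)`, evaluated at `t = u · x`. Writing `a⁻¹ ψ(s / a)` by Fourier inversion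
as `(2π)⁻¹ ∫ e^{iωs} ψ̂(aω) dω` and exchanging the `b`- and `ω`-integrals (absolutely convergent,
since `Φ(u, ·, a)` is integrable by rapid decay and `ψ̂` is Schwartz) produces `Φ̂(u, ω, a)`,
so the two sides agree already as integrands in `(u, a)`.
-/

open FourierTransform

lemma FT1_eq_fourier (g : ℝ → ℂ) (ω : ℝ) : FT1 g ω = 𝓕 g (ω / (2 * π)) := by
  rw [FT1, Real.fourier_real_eq_integral_exp_smul]
  refine integral_congr_ae (.of_forall fun x => ?_)
  have hphase : -2 * π * x * (ω / (2 * π)) = -(x * ω) := by field_simp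
  simp only [smul_eq_mul]
  rw [mul_comm, hphase]
  push_cast
  ring_nf

namespace SchwartzMap

lemma continuous_FT1 (ψ : 𝓢(ℝ, ℂ)) : Continuous (FT1 ψ) := by
  simp_rw [funext (FT1_eq_fourier ψ), ← fourier_coe]
  fun_prop

lemma integrable_FT1_comp_mul (ψ : 𝓢(ℝ, ℂ)) {a : ℝ} (ha : a ≠ 0) :
    Integrable (fun ω : ℝ => FT1 ψ (a * ω)) := by
  simp_rw [FT1_eq_fourier, ← fourier_coe, mul_div_right_comm a]
  exact (𝓕 ψ).integrable.comp_mul_left' (by positivity)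

lemma integral_exp_mul_FT1 (ψ : 𝓢(ℝ, ℂ)) (s : ℝ) :
    ∫ ω : ℝ, Complex.exp (Complex.I * (ω * s : ℝ)) * FT1 ψ ω = ((2 * π : ℝ) : ℂ) * ψ s := by
  have hinv := congrFun (ψ.continuous.fourierInv_fourier_eq ψ.integrable (𝓕 ψ).integrable) s
  rw [Real.fourierInv_eq'] at hinv
  have hsub := Measure.integral_comp_mul_left
    (fun w : ℝ => Complex.exp (((2 * π * inner ℝ w s : ℝ) : ℂ) * Complex.I) • 𝓕 (ψ : ℝ → ℂ) w)
    (2 * π)⁻¹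
  rw [hinv, inv_inv, abs_of_pos Real.two_pi_pos] at hsub
  rw [← Complex.real_smul, ← hsub]
  refine integral_congr_ae (.of_forall fun ω => ?_)
  simp only [FT1_eq_fourier, smul_eq_mul, RCLike.inner_apply, conj_trivial]
  rw [inv_mul_eq_div, mul_comm (2 * π), mul_div_assoc', div_mul_cancel₀ _ Real.two_pi_pos.ne',
    mul_comm Complex.I, mul_comm ω]

lemma integral_exp_mul_FT1_comp_mul (ψ : 𝓢(ℝ, ℂ)) {a : ℝ} (ha : 0 < a) (s : ℝ) :
    ∫ ω : ℝ, Complex.exp (Complex.I * (ω * s : ℝ)) * FT1 ψ (a * ω)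
      = ((2 * π : ℝ) : ℂ) * ((a : ℂ)⁻¹ * ψ (s / a)) := by
  have hsub := Measure.integral_comp_mul_left
    (fun ω : ℝ => Complex.exp (Complex.I * (ω * (s / a) : ℝ)) * FT1 ψ ω) a
  rw [integral_exp_mul_FT1, abs_inv, abs_of_pos ha, Complex.real_smul] at hsub
  have hphase : ∀ ω : ℝ, a * ω * (s / a) = ω * s := fun ω => by field_simp
  simp only [hphase] at hsub
  rw [hsub]
  push_cast
  ring

lemma integral_exp_mul_FT1_mul_FT1_comp_mul (ψ : 𝓢(ℝ, ℂ)) {f : ℝ → ℂ} (hf : Integrable f)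
    {a : ℝ} (ha : 0 < a) (t : ℝ) :
    ∫ ω : ℝ, Complex.exp (Complex.I * (ω * t : ℝ)) * FT1 f ω * FT1 ψ (a * ω)
      = ((2 * π : ℝ) : ℂ) * ∫ b : ℝ, f b * ((a : ℂ)⁻¹ * ψ ((t - b) / a)) := by
  set G : ℝ → ℝ → ℂ := fun ω b =>
    f b * (Complex.exp (Complex.I * (ω * (t - b) : ℝ)) * FT1 ψ (a * ω))
  have hphase : ∀ ω b : ℝ, Complex.exp (Complex.I * (ω * (t - b) : ℝ))
      = Complex.exp (Complex.I * (ω * t : ℝ)) * Complex.exp (-(Complex.I * (b * ω : ℝ))) := by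
    intro ω b
    rw [← Complex.exp_add]
    push_cast
    ring_nf
  have hG : Integrable (Function.uncurry G) (volume.prod volume) := by
    refine ((integrable_FT1_comp_mul ψ ha.ne').mul_prod hf).norm.mono' ?_
      (.of_forall fun ⟨ω, b⟩ => ?_)
    · have hexp : Continuous fun p : ℝ × ℝ => Complex.exp (Complex.I * (p.1 * (t - p.2) : ℝ)) := by
        fun_prop
      exact hf.aestronglyMeasurable.comp_snd.mul <| Continuous.aestronglyMeasurable <|
        hexp.mul ((continuous_FT1 ψ).comp (by fun_prop))
    · simp only [Function.uncurry_apply_pair, G, norm_mul, Complex.norm_exp_I_mul_ofReal, one_mul]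
      exact (mul_comm _ _).le
  calc ∫ ω : ℝ, Complex.exp (Complex.I * (ω * t : ℝ)) * FT1 f ω * FT1 ψ (a * ω)
      = ∫ ω : ℝ, ∫ b : ℝ, G ω b := by
        refine integral_congr_ae (.of_forall fun ω => ?_)
        simp only [G]
        rw [FT1, ← integral_const_mul, ← integral_mul_const]
        congr 1 with b
        rw [hphase]
        ring
    _ = ∫ b : ℝ, ∫ ω : ℝ, G ω b := integral_integral_swap hG
    _ = ∫ b : ℝ, ((2 * π : ℝ) : ℂ) * (f b * ((a : ℂ)⁻¹ * ψ ((t - b) / a))) := by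
        refine integral_congr_ae (.of_forall fun b => ?_)
        simp only [G]
        rw [integral_const_mul, integral_exp_mul_FT1_comp_mul ψ ha]
        ring
    _ = _ := integral_const_mul _ _

end SchwartzMap

lemma RapidDecay.integrable_slice {n : ℕ} {Φ : Sph n → ℝ → ℝ → ℂ} (hΦ : RapidDecay Φ) (u : Sph n)
    {a : ℝ} (ha : 0 < a) : Integrable (fun b => Φ u b a) := by
  have hcont : Continuous (fun b => Φ u b a) :=
    hΦ.cont.comp_continuous (f := fun b : ℝ => (u, b, a)) (by fun_prop)
      fun _ => ⟨mem_univ _, mem_univ _, ha⟩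
  obtain ⟨C, hC⟩ := hΦ.decay 0 2
  refine (integrable_inv_one_add_sq.const_mul (C / 2)).mono' hcont.aestronglyMeasurable
    (.of_forall fun b => ?_)
  have h := hC u b a ha
  norm_num at h
  rw [← div_eq_mul_inv, div_div, le_div_iff₀ (by positivity)]
  linarith

theorem ridgelet_synthesis_fourier_formula_general
    (n : ℕ) (ψ : SchwartzMap ℝ ℂ)
    (Φ : Sph n → ℝ → ℝ → ℂ) (hΦ : RapidDecay Φ) :
    ∀ x : En n, RTsynth ⇑ψ Φ x = ((2 * π : ℝ) : ℂ)⁻¹ *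
      ∫ u : Sph n, (∫ a in Ioi (0:ℝ), (∫ ω : ℝ,
          Complex.exp (Complex.I * (ω * (inner ℝ (u : En n) x : ℝ) : ℝ)) *
            (∫ b : ℝ, Φ u b a * Complex.exp (-(Complex.I * (b * ω : ℝ)))) *
            FT1 ⇑ψ (a * ω) * ((a ^ n : ℝ) : ℂ)⁻¹))
        ∂(sphMeasure n) := by
  intro x
  rw [RTsynth, ← integral_const_mul]
  refine integral_congr_ae (.of_forall fun u => ?_)
  dsimp only
  rw [← integral_const_mul]
  refine setIntegral_congr_fun measurableSet_Ioi fun a (ha : 0 < a) => ?_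
  simp only [integral_mul_const, ridgelet, real_inner_comm x, ← FT1.eq_1]
  rw [ψ.integral_exp_mul_FT1_mul_FT1_comp_mul (hΦ.integrable_slice u ha) ha]
  field_simp

/-- Fourier representation of the ridgelet synthesis operator:
R^t_ψΦ(x) = (1/(2π)) ∫_{𝕊^{n-1}} ∫₀^∞ ∫_ℝ e^{iω(u·x)} Φ̂(u,ω,a) ψ̂(aω) a^{−n} dω da du,
with Φ̂ the Fourier transform of Φ in the variable b. -/
theorem ridgelet_synthesis_fourier_formula
    (n : ℕ) (hn : 2 ≤ n) (ψ : SchwartzMap ℝ ℂ)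
    (Φ : Sph n → ℝ → ℝ → ℂ) (hΦ : RapidDecay Φ) :
    ∀ x : En n, RTsynth ⇑ψ Φ x = ((2 * π : ℝ) : ℂ)⁻¹ *
      ∫ u : Sph n, (∫ a in Ioi (0:ℝ), (∫ ω : ℝ,
          Complex.exp (Complex.I * (ω * (inner ℝ (u : En n) x : ℝ) : ℝ)) *
            (∫ b : ℝ, Φ u b a * Complex.exp (-(Complex.I * (b * ω : ℝ)))) *
            FT1 ⇑ψ (a * ω) * ((a ^ n : ℝ) : ℂ)⁻¹))
        ∂(sphMeasure n) :=
  ridgelet_synthesis_fourier_formula_general n ψ Φ hΦ
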